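/- (Flat helical groups.) Let θ₀ ∈ [0,2π), τ₀ ≠ 0 and n ≥ 1 be the parameters of a discrete helical lattice H₀ with reciprocal lattice H₀'. Then the following three statements are equivalent: (1) (2, 0) ∈ H₀'; (2) (θ₀ = 0 or θ₀ = π) and (n = 1 or n = 2); (3) for every x₀ ∈ ℝ³ there exists a 2-dimensional affine subspace of ℝ³ containing the orbit {R_θ x₀ + τ e₃ : (θ, τ) ∈ H₀}. -/

import Mathlib

/-!
The pair `(2, 0)` lies in `H₀'` exactly when every angle of `H₀` is a multiple of `π`, i.e. when
`sin θ₀ = 0` and `sin (2π/n) = 0`; for `θ₀ ∈ [0, 2π)` and `n ≥ 1` this is condition (2).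
If all rotations are by `0` or `π`, every orbit lies in a vertical plane containing the axis and
`x₀`. Otherwise the orbit of `e₁` contains four affinely independent points: `j = -1, 0, 1, 2`
on the helix `j ↦ (θ₀ j, τ₀ j)` when `sin θ₀ ≠ 0`, and three points of the circle at height `0`
together with one at height `τ₀ ≠ 0` when `n ≥ 3`.
-/

noncomputable section

open Real

/-- Reduction of a real number modulo 2π into [0, 2π). -/
def mod2pi (x : ℝ) : ℝ := x - 2*Real.pi * ⌊x / (2*Real.pi)⌋

/-- The discrete helical lattice with parameters θ₀, τ₀, n:
`H₀ = {((2πi/n + θ₀ j) mod 2π, τ₀ j) : i ∈ {0,…,n−1}, j ∈ ℤ} ⊂ [0,2π) × ℝ`. -/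
def helLat (θ₀ τ₀ : ℝ) (n : ℕ) : Set (ℝ × ℝ) :=
  {p | ∃ i j : ℤ, 0 ≤ i ∧ i < (n : ℤ) ∧
    p = (mod2pi (2*Real.pi*i/n + θ₀*j), τ₀*j)}

/-- The reciprocal helical lattice:
`H₀' = {(α,β) ∈ ℤ × ℝ : αθ + βτ ∈ 2πℤ for all (θ,τ) ∈ H₀}`. -/
def helRec (θ₀ τ₀ : ℝ) (n : ℕ) : Set (ℤ × ℝ) :=
  {q | ∀ p ∈ helLat θ₀ τ₀ n, ∃ m : ℤ, (q.1 : ℝ) * p.1 + q.2 * p.2 = 2*Real.pi*m}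

abbrev V3 : Type := Fin 3 → ℝ

/-- Rotation by angle `θ` about the `e₃` axis. -/
def Rot (θ : ℝ) : Matrix (Fin 3) (Fin 3) ℝ :=
  !![Real.cos θ, -Real.sin θ, 0; Real.sin θ, Real.cos θ, 0; 0, 0, 1]


theorem Submodule.exists_le_finrank_eq {K V : Type*} [DivisionRing K] [AddCommGroup V]
    [Module K V] [FiniteDimensional K V] (p : Submodule K V) {k : ℕ}
    (hpk : Module.finrank K p ≤ k) (hk : k ≤ Module.finrank K V) :
    ∃ q : Submodule K V, p ≤ q ∧ Module.finrank K q = k := by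
  induction k, hpk using Nat.le_induction with
  | base => exact ⟨p, le_rfl, rfl⟩
  | succ k _ ih =>
    obtain ⟨q, hpq, hq⟩ := ih (by omega)
    obtain ⟨v, -, hv⟩ := SetLike.exists_of_lt (Submodule.lt_top_of_finrank_lt_finrank
      (show Module.finrank K q < Module.finrank K V by omega))
    exact ⟨q ⊔ Submodule.span K {v}, hpq.trans le_sup_left,
      by rw [Submodule.finrank_sup_span_singleton hv, hq]⟩

theorem AffineSubspace.card_le_finrank_direction {K V P : Type*} [DivisionRing K]
    [AddCommGroup V] [Module K V] [AddTorsor V P] (S : AffineSubspace K P)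
    [FiniteDimensional K S.direction] {ι : Type*} [Fintype ι] {v : ι → V}
    (hv : LinearIndependent K v) {p : P} (hp : p ∈ S) (hvp : ∀ i, v i +ᵥ p ∈ S) :
    Fintype.card ι ≤ Module.finrank K S.direction := by
  have hmem (i : ι) : v i ∈ S.direction := by
    simpa using AffineSubspace.vsub_mem_direction (hvp i) hp
  exact (LinearIndependent.of_comp S.direction.subtype
    (v := fun i => (⟨v i, hmem i⟩ : S.direction)) hv).fintype_card_le_finrank

theorem sin_eq_zero_iff_eq_zero_or_eq_pi {θ : ℝ} (hθ : θ ∈ Set.Ico 0 (2 * π)) :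
    sin θ = 0 ↔ θ = 0 ∨ θ = π := by
  refine ⟨fun h => ?_, by rintro (rfl | rfl) <;> simp⟩
  obtain ⟨k, rfl⟩ := Real.sin_eq_zero_iff.1 h
  have hk0 : (0 : ℝ) ≤ k := nonneg_of_mul_nonneg_left hθ.1 pi_pos
  have hk2 : (k : ℝ) < 2 := lt_of_mul_lt_mul_right hθ.2 pi_pos.le
  have : k = 0 ∨ k = 1 := by
    have : 0 ≤ k := by exact_mod_cast hk0
    have : k < 2 := by exact_mod_cast hk2
    omega
  rcases this with rfl | rfl <;> simp

theorem sin_two_pi_div_eq_zero_iff {n : ℕ} (hn : 1 ≤ n) :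
    sin (2 * π / n) = 0 ↔ n = 1 ∨ n = 2 := by
  refine ⟨fun h => ?_, by rintro (rfl | rfl) <;> simp⟩
  by_contra hn12
  have hn3 : (3 : ℝ) ≤ n := by exact_mod_cast (show 3 ≤ n by omega)
  have hlt : 2 * π / n < π := by
    rw [div_lt_iff₀ (by positivity)]; nlinarith [pi_pos]
  exact (sin_pos_of_pos_of_lt_pi (by positivity) hlt).ne' h

theorem sin_int_mul_add_int_mul_eq_zero {x y : ℝ} (hx : sin x = 0) (hy : sin y = 0) (i j : ℤ) :
    sin (i * x + j * y) = 0 := by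
  obtain ⟨k, rfl⟩ := Real.sin_eq_zero_iff.1 hx
  obtain ⟨l, rfl⟩ := Real.sin_eq_zero_iff.1 hy
  exact Real.sin_eq_zero_iff.2 ⟨i * k + j * l, by push_cast; ring⟩

theorem sin_mod2pi (x : ℝ) : sin (mod2pi x) = sin x := by
  rw [mod2pi, mul_comm, sin_sub_int_mul_two_pi]

theorem cos_mod2pi (x : ℝ) : cos (mod2pi x) = cos x := by
  rw [mod2pi, mul_comm, cos_sub_int_mul_two_pi]

theorem Rot_mod2pi (x : ℝ) : Rot (mod2pi x) = Rot x := by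
  rw [Rot, Rot, sin_mod2pi, cos_mod2pi]

theorem mem_helRec_two_zero_iff (θ₀ τ₀ : ℝ) (n : ℕ) :
    ((2 : ℤ), (0 : ℝ)) ∈ helRec θ₀ τ₀ n ↔ ∀ p ∈ helLat θ₀ τ₀ n, sin p.1 = 0 := by
  refine forall₂_congr fun p _ => ?_
  rw [Real.sin_eq_zero_iff]
  refine exists_congr fun m => ?_
  push_cast
  constructor <;> intro h <;> linarith [pi_pos]

theorem forall_mem_helLat_sin_eq_zero_iff (θ₀ τ₀ : ℝ) {n : ℕ} (hn : 1 ≤ n) :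
    (∀ p ∈ helLat θ₀ τ₀ n, sin p.1 = 0) ↔ sin θ₀ = 0 ∧ sin (2 * π / n) = 0 := by
  constructor
  · intro h
    refine ⟨by simpa [sin_mod2pi] using h _ ⟨0, 1, le_rfl, by omega, rfl⟩, ?_⟩
    rcases Nat.lt_or_ge n 2 with hn1 | hn2
    · obtain rfl : n = 1 := by omega
      simp
    · simpa [sin_mod2pi] using h _ ⟨1, 0, zero_le_one, by omega, rfl⟩
  · rintro ⟨hθ₀, hn⟩ p ⟨i, j, -, -, rfl⟩
    rw [sin_mod2pi]
    convert sin_int_mul_add_int_mul_eq_zero hn hθ₀ i j using 2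
    ring

theorem Rot_mulVec_e₁_add_smul_e₃ (a t : ℝ) :
    (Rot a).mulVec ![1, 0, 0] + t • (![0, 0, 1] : V3) = ![cos a, sin a, t] := by
  ext i; fin_cases i <;> simp [Rot]

theorem Rot_mulVec_of_sin_eq_zero {a : ℝ} (ha : sin a = 0) (x : V3) :
    (Rot a).mulVec x = x + (cos a - 1) • ![x 0, x 1, 0] := by
  ext i; fin_cases i <;> simp [Rot, Matrix.mulVec, dotProduct, Fin.sum_univ_three, ha] <;> ring

theorem exists_plane_of_forall_sin_eq_zero {H : Set (ℝ × ℝ)} (hH : ∀ p ∈ H, sin p.1 = 0)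
    (x₀ : V3) : ∃ S : AffineSubspace ℝ V3, Module.finrank ℝ S.direction = 2 ∧
      ∀ p ∈ H, (Rot p.1).mulVec x₀ + p.2 • (![0, 0, 1] : V3) ∈ S := by
  set W := Submodule.span ℝ (Set.range ![![x₀ 0, x₀ 1, 0], (![0, 0, 1] : V3)])
  obtain ⟨D, hWD, hD⟩ := W.exists_le_finrank_eq (k := 2)
    ((finrank_range_le_card _).trans (by simp)) (by simp)
  refine ⟨AffineSubspace.mk' x₀ D, by rwa [AffineSubspace.direction_mk'], fun p hp => ?_⟩
  rw [AffineSubspace.mem_mk', Rot_mulVec_of_sin_eq_zero (hH p hp), vsub_eq_sub,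
    add_assoc, add_sub_cancel_left]
  exact hWD (W.add_mem (W.smul_mem _ (Submodule.subset_span ⟨0, rfl⟩))
    (W.smul_mem _ (Submodule.subset_span ⟨1, rfl⟩)))

theorem AffineSubspace.card_le_finrank_direction_of_det_ne_zero {K : Type*} [Field K] {m : ℕ}
    {S : AffineSubspace K (Fin m → K)} {p : Fin m → K} (hp : p ∈ S) {v : Fin m → Fin m → K}
    (hv : ∀ i, v i + p ∈ S) (hdet : (Matrix.of v).det ≠ 0) :
    m ≤ Module.finrank K S.direction := by
  simpa using S.card_le_finrank_direction
    (Matrix.linearIndependent_rows_iff_isUnit.2 ((Matrix.isUnit_iff_isUnit_det _).2 hdet.isUnit))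
    hp hv

theorem three_le_finrank_of_helix_subset {S : AffineSubspace ℝ V3} {θ τ : ℝ} (hθ : sin θ ≠ 0)
    (hτ : τ ≠ 0) (hS : ∀ j : ℤ, ![cos (θ * j), sin (θ * j), τ * j] ∈ S) :
    3 ≤ Module.finrank ℝ S.direction := by
  have hcos : cos θ - 1 ≠ 0 := by
    intro h
    have := sin_sq_add_cos_sq θ
    exact hθ (by nlinarith)
  refine S.card_le_finrank_direction_of_det_ne_zero (by simpa using hS 0)
    (v := ![![cos θ - 1, sin θ, τ], ![cos (2 * θ) - 1, sin (2 * θ), 2 * τ],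
      ![cos θ - 1, -sin θ, -τ]]) (fun i => ?_) ?_
  · fin_cases i
    · convert hS 1 using 1; ext w; fin_cases w <;> simp
    · convert hS 2 using 1; ext w; fin_cases w <;> simp [mul_comm]
    · convert hS (-1) using 1; ext w; fin_cases w <;> simp
  · have hdet : (Matrix.of ![![cos θ - 1, sin θ, τ], ![cos (2 * θ) - 1, sin (2 * θ), 2 * τ],
        ![cos θ - 1, -sin θ, -τ]]).det = -4 * (cos θ - 1) ^ 2 * sin θ * τ := by
      simp [Matrix.det_fin_three, cos_two_mul, sin_two_mul]; ring
    rw [hdet]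
    exact mul_ne_zero (mul_ne_zero (mul_ne_zero (by norm_num) (pow_ne_zero 2 hcos)) hθ) hτ

theorem three_le_finrank_of_rotations_subset {S : AffineSubspace ℝ V3} {a θ τ : ℝ}
    (ha : sin a ≠ 0) (hτ : τ ≠ 0) (h₀ : ![1, 0, 0] ∈ S) (h₁ : ![cos a, sin a, 0] ∈ S)
    (h₂ : ![cos (2 * a), sin (2 * a), 0] ∈ S) (h₃ : ![cos θ, sin θ, τ] ∈ S) :
    3 ≤ Module.finrank ℝ S.direction := by
  have hcos : 1 - cos a ≠ 0 := by
    intro h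
    have := sin_sq_add_cos_sq a
    exact ha (by nlinarith)
  refine S.card_le_finrank_direction_of_det_ne_zero h₀
    (v := ![![cos a - 1, sin a, 0], ![cos (2 * a) - 1, sin (2 * a), 0],
      ![cos θ - 1, sin θ, τ]]) (fun i => ?_) ?_
  · fin_cases i
    · convert h₁ using 1; ext w; fin_cases w <;> simp
    · convert h₂ using 1; ext w; fin_cases w <;> simp
    · convert h₃ using 1; ext w; fin_cases w <;> simp
  · have hdet : (Matrix.of ![![cos a - 1, sin a, 0], ![cos (2 * a) - 1, sin (2 * a), 0],
        ![cos θ - 1, sin θ, τ]]).det = 2 * τ * sin a * (1 - cos a) := by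
      simp [Matrix.det_fin_three, cos_two_mul, sin_two_mul]; ring
    rw [hdet]
    exact mul_ne_zero (mul_ne_zero (mul_ne_zero two_ne_zero hτ) ha) hcos

theorem sin_eq_zero_of_orbit_subset {θ₀ τ₀ : ℝ} (hτ₀ : τ₀ ≠ 0) {n : ℕ} (hn : 1 ≤ n)
    {S : AffineSubspace ℝ V3} (hS : Module.finrank ℝ S.direction = 2)
    (hsub : ∀ p ∈ helLat θ₀ τ₀ n, (Rot p.1).mulVec ![1, 0, 0] + p.2 • (![0, 0, 1] : V3) ∈ S) :
    sin θ₀ = 0 ∧ sin (2 * π / n) = 0 := by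
  have hpt (i j : ℤ) (hi : 0 ≤ i) (hin : i < n) :
      ![cos (2 * π * i / n + θ₀ * j), sin (2 * π * i / n + θ₀ * j), τ₀ * j] ∈ S := by
    have := hsub _ ⟨i, j, hi, hin, rfl⟩
    rwa [Rot_mod2pi, Rot_mulVec_e₁_add_smul_e₃] at this
  by_contra hne
  suffices 3 ≤ Module.finrank ℝ S.direction by omega
  by_cases hθ₀ : sin θ₀ = 0
  · have ha : sin (2 * π / n) ≠ 0 := fun h => hne ⟨hθ₀, h⟩
    have hn3 : 3 ≤ n := by
      have := mt (sin_two_pi_div_eq_zero_iff hn).2 ha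
      omega
    refine three_le_finrank_of_rotations_subset ha hτ₀ ?_ ?_ ?_
      (by simpa using hpt 0 1 le_rfl (by omega))
    · simpa using hpt 0 0 le_rfl (by omega)
    · simpa [mul_div_assoc] using hpt 1 0 zero_le_one (by omega)
    · simpa [mul_div_assoc, mul_comm] using hpt 2 0 zero_le_two (by omega)
  · exact three_le_finrank_of_helix_subset hθ₀ hτ₀ fun j => by
      simpa using hpt 0 j le_rfl (by omega)

/-- **Flat helical groups.** The following are equivalent:
(1) `(2,0)` belongs to the reciprocal helical lattice;
(2) `θ₀ ∈ {0, π}` and `n ∈ {1, 2}`;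
(3) every orbit of the helical group lies in a 2-dimensional affine subspace. -/
theorem flat_helical_groups (θ₀ τ₀ : ℝ) (hθ₀ : θ₀ ∈ Set.Ico 0 (2*Real.pi)) (hτ₀ : τ₀ ≠ 0)
    (n : ℕ) (hn : 1 ≤ n) :
    ((((2 : ℤ), (0 : ℝ)) ∈ helRec θ₀ τ₀ n) ↔
      ((θ₀ = 0 ∨ θ₀ = Real.pi) ∧ (n = 1 ∨ n = 2))) ∧
    (((θ₀ = 0 ∨ θ₀ = Real.pi) ∧ (n = 1 ∨ n = 2)) ↔
      (∀ x₀ : V3, ∃ S : AffineSubspace ℝ V3,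
        Module.finrank ℝ S.direction = 2 ∧
        ∀ p ∈ helLat θ₀ τ₀ n,
          (Rot p.1).mulVec x₀ + p.2 • (![0,0,1] : V3) ∈ S)) := by
  have hlat := forall_mem_helLat_sin_eq_zero_iff θ₀ τ₀ hn
  have hparams : (sin θ₀ = 0 ∧ sin (2 * π / n) = 0) ↔
      (θ₀ = 0 ∨ θ₀ = π) ∧ (n = 1 ∨ n = 2) :=
    and_congr (sin_eq_zero_iff_eq_zero_or_eq_pi hθ₀) (sin_two_pi_div_eq_zero_iff hn)
  refine ⟨(mem_helRec_two_zero_iff θ₀ τ₀ n).trans (hlat.trans hparams),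
    hparams.symm.trans ⟨fun h => exists_plane_of_forall_sin_eq_zero (hlat.2 h), fun h => ?_⟩⟩
  obtain ⟨S, hS, hsub⟩ := h ![1, 0, 0]
  exact sin_eq_zero_of_orbit_subset hτ₀ hn hS hsub
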